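/- arXiv:2103.09476 — 4 statements merged into one kernel-verified Lean document; each statement's English description precedes it below -/
import Mathlib

section
/- Comparison principle for the coupled monotone system: suppose w is a monotone (possibly multivalued) graph on ℝ and k > 0. If (X, Ψ, W) solves X + k(X - W) = F, Ψ + k(W - X) = G with W ∈ w(Ψ), and (X̄, Ψ̄, W̄) solves the same system with data (F̄, Ḡ), then |X - X̄| + |Ψ - Ψ̄| ≤ |F - F̄| + |G - Ḡ|. -/
/-- comparison principle for the coupled monotone system. -/
theorem kinetic_comparison_principle
    (w : Set (ℝ × ℝ))
    (hmono : ∀ p ∈ w, ∀ q ∈ w, (q.2 - p.2) * (q.1 - p.1) ≥ 0)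
    (k : ℝ) (hk : 0 < k)
    (X Ψ W F G Xb Ψb Wb Fb Gb : ℝ)
    (h1 : X - k * W + k * X = F)
    (h2 : Ψ + k * W - k * X = G)
    (hW : (Ψ, W) ∈ w)
    (h1b : Xb - k * Wb + k * Xb = Fb)
    (h2b : Ψb + k * Wb - k * Xb = Gb)
    (hWb : (Ψb, Wb) ∈ w) :
    |X - Xb| + |Ψ - Ψb| ≤ |F - Fb| + |G - Gb| := by
  have key : (Wb - W) * (Ψb - Ψ) ≥ 0 := hmono _ hW _ hWb
  have hf1 := le_abs_self (F - Fb)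
  have hf2 := neg_abs_le (F - Fb)
  have hg1 := le_abs_self (G - Gb)
  have hg2 := neg_abs_le (G - Gb)
  rcases le_total (X - Xb) 0 with hx | hx <;> rcases le_total (Ψ - Ψb) 0 with hp | hp
  · rw [abs_of_nonpos hx, abs_of_nonpos hp]; linarith
  · -- X - Xb ≤ 0 ≤ Ψ - Ψb : then Wb - W ≤ 0 or ψ = 0
    rw [abs_of_nonpos hx, abs_of_nonneg hp]
    rcases eq_or_lt_of_le hp with h0 | h0
    · linarith
    · have hw : Wb - W ≤ 0 := by nlinarith [key]
      nlinarith [mul_nonneg hk.le (sub_nonneg.2 hx), mul_nonpos_of_nonneg_of_nonpos hk.le hw]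
  · rw [abs_of_nonneg hx, abs_of_nonpos hp]
    rcases eq_or_lt_of_le hp with h0 | h0
    · linarith
    · have hw : 0 ≤ Wb - W := by nlinarith [key]
      nlinarith [mul_nonneg hk.le hx, mul_nonneg hk.le hw]
  · rw [abs_of_nonneg hx, abs_of_nonneg hp]; linarith
end

section
/- Ordering property of the KIN1 step: under the assumptions 0 < χ* < R, 0 ≤ X̄ < R, 0 ≤ S̄ < 1, k > 0, the root X ∈ [0, R) of the KIN1 quadratic satisfies: if X̄ < χ* then X̄ < X < χ*; if X̄ > χ* then χ* < X < X̄; and if X̄ = χ* then X = X̄. -/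
/-- ordering property of the KIN1 step root relative to X̄ and χ*. -/
theorem KIN1_ordering
    (R χs k Xb Sb X : ℝ)
    (hχs : 0 < χs) (hχsR : χs < R) (hk : 0 < k)
    (hXb0 : 0 ≤ Xb) (hXbR : Xb < R) (hSb0 : 0 ≤ Sb) (hSb1 : Sb < 1)
    (hX : X ∈ Set.Ico (0 : ℝ) R)
    (hroot : (k / R) * (R - X) * (χs - X) + Sb * X + (1 - Sb) * Xb - X = 0) :
    (Xb < χs → Xb < X ∧ X < χs) ∧
    (χs < Xb → χs < X ∧ X < Xb) ∧
    (Xb = χs → X = Xb) := by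
  have hR : 0 < R := hχs.trans hχsR
  have hXR : X < R := hX.2
  have hA : 0 < k / R * (R - X) := mul_pos (div_pos hk hR) (sub_pos.2 hXR)
  have hS : 0 < 1 - Sb := by linarith
  have h1 : k / R * (R - X) * (χs - X) = (1 - Sb) * (X - Xb) := by
    linear_combination hroot
  have h2 : (χs - X) * ((1 - Sb) + k / R * (R - X)) = (1 - Sb) * (χs - Xb) := by
    linear_combination hroot
  have hpos : 0 < (1 - Sb) + k / R * (R - X) := by linarith
  refine ⟨fun h => ?_, fun h => ?_, fun h => ?_⟩
  · have hx1 : 0 < χs - X := by nlinarith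
    have hx2 : 0 < X - Xb := by nlinarith
    constructor <;> linarith
  · have hx1 : χs - X < 0 := by nlinarith
    have hx2 : X - Xb < 0 := by nlinarith
    constructor <;> linarith
  · have : χs - X = 0 := by
      rcases lt_trichotomy (χs - X) 0 with hlt | heq | hgt
      · nlinarith
      · exact heq
      · nlinarith
    linarith
end

section
/- Strict contraction of the discrepancy for KIN1: with 0 < χ* < R, 0 ≤ X̄ < R, 0 ≤ S̄ < 1, k > 0, and X ∈ [0, R) the KIN1 root with X ≠ χ̄* discrepancy, the quantities Q = X - χ* and Q̄ = X̄ - χ* satisfy |Q| ≤ ((1-S̄)/((1-S̄) + (k/R)(R - X))) |Q̄| < |Q̄| whenever Q̄ ≠ 0. -/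
/-- strict contraction of the discrepancy Q = X - χ* for the KIN1 step. -/
theorem KIN1_Q_contraction
    (R χs k Xb Sb X : ℝ)
    (hχs : 0 < χs) (hχsR : χs < R) (hk : 0 < k)
    (hXb0 : 0 ≤ Xb) (hXbR : Xb < R) (hSb0 : 0 ≤ Sb) (hSb1 : Sb < 1)
    (hX : X ∈ Set.Ico (0 : ℝ) R)
    (hroot : (k / R) * (R - X) * (χs - X) + Sb * X + (1 - Sb) * Xb - X = 0)
    (Q Qb : ℝ) (hQ : Q = X - χs) (hQb : Qb = Xb - χs) (hQbne : Qb ≠ 0) :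
    |Q| ≤ ((1 - Sb) / ((1 - Sb) + (k / R) * (R - X))) * |Qb| ∧ |Q| < |Qb| := by
  obtain ⟨hX0, hXR⟩ := hX
  have hR : 0 < R := hχs.trans hχsR
  have hkR : 0 < (k / R) * (R - X) := mul_pos (div_pos hk hR) (by linarith)
  have hSb : 0 < 1 - Sb := by linarith
  have hD : 0 < (1 - Sb) + (k / R) * (R - X) := by linarith
  have hkey : ((1 - Sb) + (k / R) * (R - X)) * Q = (1 - Sb) * Qb := by
    subst hQ hQb; linear_combination -hroot
  have hQeq : Q = ((1 - Sb) / ((1 - Sb) + (k / R) * (R - X))) * Qb := by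
    rw [div_mul_eq_mul_div, eq_div_iff hD.ne']
    linarith [hkey]
  have habs : |Q| = ((1 - Sb) / ((1 - Sb) + (k / R) * (R - X))) * |Qb| := by
    rw [hQeq, abs_mul, abs_of_pos (by positivity)]
  have hQb0 : 0 < |Qb| := abs_pos.mpr hQbne
  have hfrac : (1 - Sb) / ((1 - Sb) + (k / R) * (R - X)) < 1 := by
    rw [div_lt_one hD]; linarith
  constructor
  · exact habs.le
  · rw [habs]; nlinarith
end

section
/- Conditional equivalence of KIN2 and KIN3: let 0 < χ* < R, k̃ ∈ (0,1), X̄ ∈ [0, R), S̄ ∈ [0,1), Ψ̄ = S̄(R - X̄). The KIN3 update X₃ = k̃W + (1-k̃)X̄ (with W from the KIN3 resolvent) equals the KIN2 update X₂ = k̃χ* + (1-k̃)X̄ for every k̃ ∈ (0,1) if and only if X̄ + S̄(R - X̄) ≥ χ* (i.e., the state is saturated, u(X̄,S̄) ≥ χ*). -/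
/-- conditional equivalence of KIN2 and KIN3: the updates coincide for every
    rate k̃ ∈ (0,1) iff the state is saturated, i.e. u(X̄,S̄) ≥ χ*. -/
theorem KIN2_KIN3_equivalence
    (R χs Xb Sb Ψb : ℝ)
    (hχs : 0 < χs) (hχsR : χs < R)
    (hXb0 : 0 ≤ Xb) (hXbR : Xb < R) (hSb0 : 0 ≤ Sb) (hSb1 : Sb < 1)
    (hΨb : Ψb = Sb * (R - Xb)) :
    (∀ kt : ℝ, 0 < kt → kt < 1 →
      kt * ((Ψb - max (Ψb + kt * (Xb - χs)) 0) / kt + Xb) + (1 - kt) * Xb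
        = kt * χs + (1 - kt) * Xb) ↔
    Xb + Sb * (R - Xb) ≥ χs := by
  have hRXb : 0 < R - Xb := by linarith
  have hΨ0 : 0 ≤ Ψb := by rw [hΨb]; exact mul_nonneg hSb0 hRXb.le
  constructor
  · intro h
    by_contra hc
    push_neg at hc
    rw [← hΨb] at hc
    have hd : 0 < χs - Xb := by linarith
    have hΨd : Ψb < χs - Xb := by linarith
    set kt := (Ψb / (χs - Xb) + 1) / 2 with hkt
    have hq0 : 0 ≤ Ψb / (χs - Xb) := div_nonneg hΨ0 hd.le
    have hq1 : Ψb / (χs - Xb) < 1 := (div_lt_one hd).mpr hΨd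
    have hk0 : 0 < kt := by rw [hkt]; linarith
    have hk1 : kt < 1 := by rw [hkt]; linarith
    have hlt : Ψb < kt * (χs - Xb) := by
      have : kt * (χs - Xb) = (Ψb + (χs - Xb)) / 2 := by
        rw [hkt]; field_simp
      rw [this]; linarith
    have hmax : max (Ψb + kt * (Xb - χs)) 0 = 0 := by
      apply max_eq_right; nlinarith
    have heq := h kt hk0 hk1
    rw [hmax] at heq
    have : Ψb / kt + Xb = χs := by
      have h2 : kt * ((Ψb - 0) / kt + Xb) = kt * χs := by linarith
      have := mul_left_cancel₀ hk0.ne' h2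
      simpa using this
    have : Ψb = kt * (χs - Xb) := by
      field_simp at this; linarith
    linarith
  · intro h kt hk0 hk1
    rw [← hΨb] at h
    have hge : 0 ≤ Ψb + kt * (Xb - χs) := by
      rcases le_or_gt 0 (χs - Xb) with h1 | h1
      · nlinarith
      · nlinarith
    have hmax : max (Ψb + kt * (Xb - χs)) 0 = Ψb + kt * (Xb - χs) :=
      max_eq_left hge
    rw [hmax]
    field_simp
    ring
end
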